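/- Let φ ∈ [0, π/2), let n ≥ 1, and let {e_1, …, e_n} and {f_1, …, f_n} be two ℂ-orthonormal bases of ℂ^n. In ℂ^{2n} = ℂ^n ⊕ ℂ^n (with the direct-sum Hermitian inner product and J acting componentwise as multiplication by i), the real span V_φ of the 2n vectors (cos(φ/2)·e_k, sin(φ/2)·J f_k) and (cos(φ/2)·J e_k, sin(φ/2)·f_k), for k = 1, …, n, is a real subspace of real dimension 2n with constant Kähler angle φ. -/

import Mathlib

noncomputable section

/-- `ℂ^n` as a Euclidean space. -/
abbrev En (n : ℕ) : Type := EuclideanSpace ℂ (Fin n)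

/-- `ℂ^{2n} = ℂ^n ⊕ ℂ^n` with the direct-sum Hermitian inner product. -/
abbrev E2n (n : ℕ) : Type := WithLp 2 (En n × En n)

/-- The complex structure `J` on `ℂ^n`, multiplication by `i`. -/
def Jc {n : ℕ} (x : En n) : En n := Complex.I • x

/-- The complex structure `J` on `ℂ^n ⊕ ℂ^n`, multiplication by `i`
(acting componentwise). -/
def Jc2 {n : ℕ} (x : E2n n) : E2n n := Complex.I • x

/-- Constant Kähler angle for real subspaces of `ℂ^n ⊕ ℂ^n`. -/
def HasConstKahlerAngle2 {n : ℕ} (V : Submodule ℝ (E2n n)) (φ : ℝ) : Prop :=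
  ∀ v ∈ V, ‖(Submodule.orthogonalProjection V (Jc2 v) : E2n n)‖ ^ 2 = Real.cos φ ^ 2 * ‖v‖ ^ 2

/-!
Put `c = cos (φ/2)`, `s = sin (φ/2)`, `u_k(c, s) = (c e_k, s J f_k)` and
`w_k(c, s) = (c J e_k, s f_k)`. The real inner products are
`⟨u_k(c, s), u_l(c', s')⟩ = ⟨w_k(c, s), w_l(c', s')⟩ = (c c' + s s') δ_kl` and
`⟨u_k(c, s), w_l(c', s')⟩ = 0`, so the `u_k(c, s), w_k(c, s)` form an orthonormal basis of
`V = V_φ`, and the `u_k(s, -c), w_k(s, -c)` are orthogonal to `V`. Since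
`J u_k(c, s) = cos φ · w_k(c, s) + sin φ · w_k(s, -c)` and
`J w_k(c, s) = -(cos φ · u_k(c, s) + sin φ · u_k(s, -c))`, the map `π_V ∘ J` acts on that
basis as `cos φ` times a rotation, so it scales norms by `|cos φ|`.
-/

open Submodule Set

section

variable {𝕜 E : Type*} [RCLike 𝕜] [NormedAddCommGroup E] [InnerProductSpace 𝕜 E]

theorem Submodule.mem_orthogonal_span_of_forall_inner_eq_zero {s : Set E} {x : E}
    (h : ∀ y ∈ s, inner 𝕜 y x = 0) : x ∈ (span 𝕜 s)ᗮ :=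
  (isOrtho_span.mpr fun _ hy _ hx => (Set.mem_singleton_iff.mp hx) ▸ h _ hy).symm
    (mem_span_singleton_self x)

theorem Orthonormal.norm_sum_smul_sq {ι : Type*} [Fintype ι] {v : ι → E}
    (hv : Orthonormal 𝕜 v) (a : ι → 𝕜) :
    ‖∑ i, a i • v i‖ ^ 2 = ∑ i, ‖a i‖ ^ 2 := by
  rw [@norm_sq_eq_re_inner 𝕜, hv.inner_sum]
  simp only [RCLike.conj_mul, map_sum, ← RCLike.ofReal_pow, RCLike.ofReal_re]

end

theorem norm_sq_map_eq_of_orthonormal_sumElim {E ι : Type*} [NormedAddCommGroup E]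
    [InnerProductSpace ℝ E] [Fintype ι] (T : E →ₗ[ℝ] E) (c : ℝ) {u w : ι → E}
    (huw : Orthonormal ℝ (Sum.elim u w)) (hu : ∀ k, T (u k) = c • w k)
    (hw : ∀ k, T (w k) = -(c • u k)) {v : E} (hv : v ∈ span ℝ (range u ∪ range w)) :
    ‖T v‖ ^ 2 = c ^ 2 * ‖v‖ ^ 2 := by
  rw [← Set.Sum.elim_range, mem_span_range_iff_exists_fun] at hv
  obtain ⟨a, rfl⟩ := hv
  set b : ι ⊕ ι → ℝ := Sum.elim (fun k => -a (.inr k)) (fun k => a (.inl k))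
  have hT : T (∑ i, a i • Sum.elim u w i) = c • ∑ i, b i • Sum.elim u w i := by
    simp only [b, Fintype.sum_sum_type, Sum.elim_inl, Sum.elim_inr, map_add, map_sum, map_smul,
      hu, hw, smul_add, Finset.smul_sum, smul_neg, neg_smul, smul_comm c]
    exact add_comm _ _
  have hb : ∑ i, b i ^ 2 = ∑ i, a i ^ 2 := by
    simp only [b, Fintype.sum_sum_type, Sum.elim_inl, Sum.elim_inr, neg_sq]
    exact add_comm _ _
  simp only [hT, norm_smul, mul_pow, huw.norm_sum_smul_sq, Real.norm_eq_abs, sq_abs, hb]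

-- The `ℝ`-inner product here is the coordinatewise one of `PiLp`,
-- not definitionally `re ⟪x, y⟫_ℂ`.
theorem EuclideanSpace.real_inner_eq_re_inner {ι : Type*} [Fintype ι]
    (x y : EuclideanSpace ℂ ι) : inner ℝ x y = (inner ℂ x y).re := by
  simp [PiLp.inner_apply, Complex.inner, Complex.re_sum]

theorem Orthonormal.im_inner_eq_zero {F ι : Type*} [NormedAddCommGroup F] [InnerProductSpace ℂ F]
    {e : ι → F} (he : Orthonormal ℂ e) (k l : ι) : (inner ℂ (e k) (e l)).im = 0 := by
  classical
  rw [orthonormal_iff_ite.mp he]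
  split_ifs <;> simp

theorem Orthonormal.real_inner_eq_ite {ι κ : Type*} [Fintype κ] [DecidableEq ι]
    {e : ι → EuclideanSpace ℂ κ} (he : Orthonormal ℂ e) (k l : ι) :
    inner ℝ (e k) (e l) = if k = l then 1 else 0 := by
  rw [EuclideanSpace.real_inner_eq_re_inner, orthonormal_iff_ite.mp he]
  split_ifs <;> simp

namespace KahlerAngle

variable {n : ℕ}

theorem real_inner_Jc_left (x y : En n) : inner ℝ (Jc x) y = (inner ℂ x y).im := by
  simp [EuclideanSpace.real_inner_eq_re_inner, Jc]

theorem real_inner_Jc_right (x y : En n) : inner ℝ x (Jc y) = -(inner ℂ x y).im := by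
  simp [EuclideanSpace.real_inner_eq_re_inner, Jc]

theorem real_inner_Jc_Jc (x y : En n) : inner ℝ (Jc x) (Jc y) = inner ℝ x y := by
  simp [EuclideanSpace.real_inner_eq_re_inner, Jc]

theorem Jc_smul (r : ℝ) (x : En n) : Jc (r • x) = r • Jc x :=
  smul_comm _ _ _

theorem Jc_Jc (x : En n) : Jc (Jc x) = -x := by
  simp [Jc, smul_smul]

theorem real_inner_toLp (a b a' b' : En n) :
    inner ℝ ((WithLp.equiv 2 (En n × En n)).symm (a, b) : E2n n)
      ((WithLp.equiv 2 (En n × En n)).symm (a', b')) = inner ℝ a a' + inner ℝ b b' :=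
  WithLp.prod_inner_apply _ _

theorem Jc2_toLp (a b : En n) :
    Jc2 ((WithLp.equiv 2 (En n × En n)).symm (a, b)) =
      (WithLp.equiv 2 (En n × En n)).symm (Jc a, Jc b) :=
  rfl

variable (e f : Fin n → En n)

def kahlerU (c s : ℝ) (k : Fin n) : E2n n :=
  (WithLp.equiv 2 (En n × En n)).symm (c • e k, s • Jc (f k))

def kahlerW (c s : ℝ) (k : Fin n) : E2n n :=
  (WithLp.equiv 2 (En n × En n)).symm (c • Jc (e k), s • f k)

def kahlerSpan (c s : ℝ) : Submodule ℝ (E2n n) :=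
  span ℝ (range (kahlerU e f c s) ∪ range (kahlerW e f c s))

variable {e f}

theorem inner_kahlerU_kahlerU (he : Orthonormal ℂ e) (hf : Orthonormal ℂ f) (c s c' s' : ℝ)
    (k l : Fin n) :
    inner ℝ (kahlerU e f c s k) (kahlerU e f c' s' l) = if k = l then c * c' + s * s' else 0 := by
  simp only [kahlerU, real_inner_toLp, real_inner_smul_left, real_inner_smul_right,
    real_inner_Jc_Jc, he.real_inner_eq_ite, hf.real_inner_eq_ite]
  split_ifs <;> ring

theorem inner_kahlerW_kahlerW (he : Orthonormal ℂ e) (hf : Orthonormal ℂ f) (c s c' s' : ℝ)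
    (k l : Fin n) :
    inner ℝ (kahlerW e f c s k) (kahlerW e f c' s' l) = if k = l then c * c' + s * s' else 0 := by
  simp only [kahlerW, real_inner_toLp, real_inner_smul_left, real_inner_smul_right,
    real_inner_Jc_Jc, he.real_inner_eq_ite, hf.real_inner_eq_ite]
  split_ifs <;> ring

theorem inner_kahlerU_kahlerW (he : Orthonormal ℂ e) (hf : Orthonormal ℂ f) (c s c' s' : ℝ)
    (k l : Fin n) : inner ℝ (kahlerU e f c s k) (kahlerW e f c' s' l) = 0 := by
  simp [kahlerU, kahlerW, real_inner_smul_left, real_inner_smul_right, real_inner_Jc_left,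
    real_inner_Jc_right, he.im_inner_eq_zero, hf.im_inner_eq_zero]

theorem inner_kahlerW_kahlerU (he : Orthonormal ℂ e) (hf : Orthonormal ℂ f) (c s c' s' : ℝ)
    (k l : Fin n) : inner ℝ (kahlerW e f c s k) (kahlerU e f c' s' l) = 0 := by
  rw [real_inner_comm, inner_kahlerU_kahlerW he hf]

theorem orthonormal_kahlerU_kahlerW (he : Orthonormal ℂ e) (hf : Orthonormal ℂ f) {c s : ℝ}
    (hcs : c ^ 2 + s ^ 2 = 1) : Orthonormal ℝ (Sum.elim (kahlerU e f c s) (kahlerW e f c s)) := by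
  rw [orthonormal_iff_ite]
  rintro (k | k) (l | l) <;>
    simp [inner_kahlerU_kahlerU he hf, inner_kahlerW_kahlerW he hf, inner_kahlerU_kahlerW he hf,
      inner_kahlerW_kahlerU he hf, ← sq, hcs]

theorem finrank_kahlerSpan (he : Orthonormal ℂ e) (hf : Orthonormal ℂ f) {c s : ℝ}
    (hcs : c ^ 2 + s ^ 2 = 1) : Module.finrank ℝ (kahlerSpan e f c s) = 2 * n := by
  rw [kahlerSpan, ← Set.Sum.elim_range,
    finrank_span_eq_card (orthonormal_kahlerU_kahlerW he hf hcs).linearIndependent]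
  simp [two_mul]

theorem kahlerU_mem_orthogonal (he : Orthonormal ℂ e) (hf : Orthonormal ℂ f) (c s : ℝ)
    (k : Fin n) : kahlerU e f s (-c) k ∈ (kahlerSpan e f c s)ᗮ := by
  refine mem_orthogonal_span_of_forall_inner_eq_zero ?_
  rintro _ (⟨l, rfl⟩ | ⟨l, rfl⟩)
  · rw [inner_kahlerU_kahlerU he hf]
    split_ifs <;> ring
  · exact inner_kahlerW_kahlerU he hf _ _ _ _ _ _

theorem kahlerW_mem_orthogonal (he : Orthonormal ℂ e) (hf : Orthonormal ℂ f) (c s : ℝ)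
    (k : Fin n) : kahlerW e f s (-c) k ∈ (kahlerSpan e f c s)ᗮ := by
  refine mem_orthogonal_span_of_forall_inner_eq_zero ?_
  rintro _ (⟨l, rfl⟩ | ⟨l, rfl⟩)
  · exact inner_kahlerU_kahlerW he hf _ _ _ _ _ _
  · rw [inner_kahlerW_kahlerW he hf]
    split_ifs <;> ring

theorem Jc2_kahlerU {c s : ℝ} (hcs : c ^ 2 + s ^ 2 = 1) (k : Fin n) :
    Jc2 (kahlerU e f c s k) =
      (c ^ 2 - s ^ 2) • kahlerW e f c s k + (2 * c * s) • kahlerW e f s (-c) k := by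
  rw [kahlerU, Jc2_toLp, WithLp.ext_iff]
  ext : 1 <;> simp only [kahlerW, Jc_smul, Jc_Jc, WithLp.ofLp_add, WithLp.ofLp_smul,
    WithLp.equiv_symm_apply, WithLp.ofLp_toLp, Prod.fst_add, Prod.snd_add, Prod.smul_fst,
    Prod.smul_snd]
  · linear_combination (norm := module) -hcs • (c • Jc (e k))
  · linear_combination (norm := module) hcs • (s • f k)

theorem Jc2_kahlerW {c s : ℝ} (hcs : c ^ 2 + s ^ 2 = 1) (k : Fin n) :
    Jc2 (kahlerW e f c s k) =
      -((c ^ 2 - s ^ 2) • kahlerU e f c s k + (2 * c * s) • kahlerU e f s (-c) k) := by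
  rw [kahlerW, Jc2_toLp, WithLp.ext_iff]
  ext : 1 <;> simp only [kahlerU, Jc_smul, Jc_Jc, WithLp.ofLp_add, WithLp.ofLp_neg,
    WithLp.ofLp_smul, WithLp.equiv_symm_apply, WithLp.ofLp_toLp, Prod.fst_add, Prod.snd_add,
    Prod.fst_neg, Prod.snd_neg, Prod.smul_fst, Prod.smul_snd]
  · linear_combination (norm := module) hcs • (c • e k)
  · linear_combination (norm := module) -hcs • (s • Jc (f k))

theorem hasConstKahlerAngle2_kahlerSpan (he : Orthonormal ℂ e) (hf : Orthonormal ℂ f)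
    {c s φ : ℝ} (hcs : c ^ 2 + s ^ 2 = 1) (hφ : Real.cos φ = c ^ 2 - s ^ 2) :
    HasConstKahlerAngle2 (kahlerSpan e f c s) φ := by
  set V := kahlerSpan e f c s
  have hu (k : Fin n) :
      V.starProjection (Jc2 (kahlerU e f c s k)) = Real.cos φ • kahlerW e f c s k :=
    eq_starProjection_of_mem_orthogonal' (V.smul_mem _ (subset_span (.inr ⟨k, rfl⟩)))
      (Vᗮ.smul_mem _ (kahlerW_mem_orthogonal he hf c s k)) (by rw [Jc2_kahlerU hcs, hφ])
  have hw (k : Fin n) :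
      V.starProjection (Jc2 (kahlerW e f c s k)) = -(Real.cos φ • kahlerU e f c s k) :=
    eq_starProjection_of_mem_orthogonal'
      (V.neg_mem (V.smul_mem _ (subset_span (.inl ⟨k, rfl⟩))))
      (Vᗮ.neg_mem (Vᗮ.smul_mem _ (kahlerU_mem_orthogonal he hf c s k)))
      (by rw [Jc2_kahlerW hcs, hφ, neg_add])
  intro v hv
  rw [← starProjection_apply]
  exact norm_sq_map_eq_of_orthonormal_sumElim
    (V.starProjection.toLinearMap ∘ₗ DistribSMul.toLinearMap ℝ (E2n n) Complex.I) _
    (orthonormal_kahlerU_kahlerW he hf hcs) hu hw hv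

end KahlerAngle

open KahlerAngle in
theorem span_constKahlerAngle_of_orthonormal_bases (n : ℕ) (φ : ℝ) (e f : Fin n → En n)
    (he : Orthonormal ℂ e) (hf : Orthonormal ℂ f) :
    Module.finrank ℝ
      (Submodule.span ℝ
        (Set.range (fun k : Fin n => ((WithLp.equiv 2 (En n × En n)).symm
            (Real.cos (φ / 2) • e k, Real.sin (φ / 2) • Jc (f k)))) ∪
         Set.range (fun k : Fin n => ((WithLp.equiv 2 (En n × En n)).symm
            (Real.cos (φ / 2) • Jc (e k), Real.sin (φ / 2) • f k))))) = 2 * n ∧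
    HasConstKahlerAngle2
      (Submodule.span ℝ
        (Set.range (fun k : Fin n => ((WithLp.equiv 2 (En n × En n)).symm
            (Real.cos (φ / 2) • e k, Real.sin (φ / 2) • Jc (f k)))) ∪
         Set.range (fun k : Fin n => ((WithLp.equiv 2 (En n × En n)).symm
            (Real.cos (φ / 2) • Jc (e k), Real.sin (φ / 2) • f k))))) φ := by
  have hcs := Real.cos_sq_add_sin_sq (φ / 2)
  have hφ : Real.cos φ = Real.cos (φ / 2) ^ 2 - Real.sin (φ / 2) ^ 2 := by
    rw [← Real.cos_two_mul', mul_div_cancel₀ φ two_ne_zero]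
  exact ⟨finrank_kahlerSpan he hf hcs, hasConstKahlerAngle2_kahlerSpan he hf hcs hφ⟩
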